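/- arXiv:1003.1426 — 2 statements merged into one kernel-verified Lean document; each statement's English description precedes it below -/
import Mathlib

section
/- Let H be a cut graph of a graph G embedded on a surface S, so that cutting S along H yields a disk D, and let x, y be two distinct vertices of H appearing on the boundary of D. Then there exists a one-sided walk from x to y in H, i.e., an x-to-y walk X in H such that for every edge e of X, one copy of e lies on the boundary arc R of D and the other copy lies on the complementary boundary arc R'. -/
/-!
Let `T` be the set of edges that `R` traverses an odd number of times. Counting edge-ends of the
walk `R` modulo 2, every vertex has even `T`-degree except `x` and `y` (when distinct), so
following unused edges of `T` from `x` can only get stuck at `y`. An edge of `T` is traversed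
exactly once by `R`, hence, as `R` and `R'` cover it twice in total, exactly once by `R'`.
-/

open SimpleGraph Finset

theorem List.card_filter_odd_count_mod_two {α : Type*} [DecidableEq α] (L : List α)
    (p : α → Prop) [DecidablePred p] :
    #{e ∈ L.toFinset | Odd (L.count e) ∧ p e} % 2 = L.countP p % 2 := by
  rw [← Finset.sum_filter_count_eq_countP, Finset.sum_nat_mod, ← Finset.filter_filter,
    Finset.filter_comm, Finset.card_filter]
  congr 1
  refine Finset.sum_congr rfl fun e _ => ?_
  split_ifs with h
  · exact (Nat.odd_iff.mp h).symm
  · exact (Nat.even_iff.mp (Nat.not_odd_iff_even.mp h)).symm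

theorem Finset.card_filter_erase_add {α : Type*} [DecidableEq α] {s : Finset α} {x : α}
    (hx : x ∈ s) (p : α → Prop) [DecidablePred p] :
    #{e ∈ s.erase x | p e} + (if p x then 1 else 0) = #{e ∈ s | p e} := by
  rw [Finset.filter_erase]
  split_ifs with h
  · exact Finset.card_erase_add_one (Finset.mem_filter.mpr ⟨hx, h⟩)
  · rw [Finset.erase_eq_of_notMem (by simp [h]), add_zero]

namespace SimpleGraph

variable {V : Type*} [DecidableEq V] {G : SimpleGraph V}

theorem Walk.countP_mem_edges_mod_two {a b : V} (W : G.Walk a b) (v : V) :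
    W.edges.countP (v ∈ ·) % 2 = ((if v = a then 1 else 0) + (if v = b then 1 else 0)) % 2 := by
  induction W with
  | nil => split_ifs <;> simp
  | cons h W ih =>
    have := h.ne
    simp only [Walk.edges_cons, List.countP_cons, Sym2.mem_iff, decide_eq_true_eq]
    split_ifs at ih ⊢ <;> grind

theorem exists_walk_forall_mem_edges_of_degree_mod_two (S : Finset (Sym2 V))
    (hS : ∀ e ∈ S, e ∈ G.edgeSet) {a b : V}
    (hdeg : ∀ v, #{e ∈ S | v ∈ e} % 2
      = ((if v = a then 1 else 0) + (if v = b then 1 else 0)) % 2) :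
    ∃ X : G.Walk a b, ∀ e ∈ X.edges, e ∈ S := by
  induction S using Finset.strongInduction generalizing a with
  | H S ih =>
  by_cases hab : a = b
  · subst hab
    exact ⟨Walk.nil, by simp⟩
  obtain ⟨e, heS, hae⟩ : ∃ e ∈ S, a ∈ e := by
    by_contra! h
    simpa [Finset.filter_false_of_mem h, hab] using hdeg a
  obtain ⟨z, rfl⟩ := Sym2.mem_iff_exists.mp hae
  have hadj : G.Adj a z := hS _ heS
  have hdeg' : ∀ v, #{e ∈ S.erase s(a, z) | v ∈ e} % 2
      = ((if v = z then 1 else 0) + (if v = b then 1 else 0)) % 2 := by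
    intro v
    have herase := Finset.card_filter_erase_add heS (v ∈ ·)
    have := hdeg v
    have := hadj.ne
    simp only [Sym2.mem_iff] at herase
    split_ifs at * <;> grind
  obtain ⟨X, hX⟩ := ih _ (Finset.erase_ssubset heS)
    (fun e he => hS e (Finset.mem_of_mem_erase he)) hdeg'
  refine ⟨Walk.cons hadj X, fun e he => ?_⟩
  rcases List.mem_cons.mp he with rfl | he
  · exact heS
  · exact Finset.mem_of_mem_erase (hX e he)

end SimpleGraph

theorem one_sided_walk_exists_general {V : Type} [DecidableEq V] (H : SimpleGraph V) (x y : V)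
    (R R' : H.Walk x y)
    (hcover : ∀ e ∈ H.edgeSet, R.edges.count e + R'.edges.count e = 2) :
    ∃ X : H.Walk x y, ∀ e ∈ X.edges, R.edges.count e = 1 ∧ R'.edges.count e = 1 := by
  set T := {e ∈ R.edges.toFinset | Odd (R.edges.count e)}
  have hT : ∀ e ∈ T, e ∈ H.edgeSet := fun e he =>
    R.edges_subset_edgeSet (List.mem_toFinset.mp (Finset.mem_filter.mp he).1)
  have hdeg : ∀ v, #{e ∈ T | v ∈ e} % 2
      = ((if v = x then 1 else 0) + (if v = y then 1 else 0)) % 2 := fun v => by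
    rw [Finset.filter_filter, List.card_filter_odd_count_mod_two, R.countP_mem_edges_mod_two]
  obtain ⟨X, hX⟩ := exists_walk_forall_mem_edges_of_degree_mod_two T hT hdeg
  refine ⟨X, fun e he => ?_⟩
  have hodd : Odd (R.edges.count e) := (Finset.mem_filter.mp (hX e he)).2
  have := hcover e (X.edges_subset_edgeSet he)
  grind

/-- let `H` be a cut graph, and let `R`, `R'` be the two `x`-to-`y` walks
forming the boundary of the disk obtained by cutting the surface along `H` (combinatorially:
two walks in `H` from `x` to `y` which together traverse every edge of `H` exactly twice).
Then there is a one-sided walk from `x` to `y` in `H`: a walk each of whose edges has one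
copy in `R` and its other copy in `R'`. -/
theorem one_sided_walk_exists {V : Type} [DecidableEq V] (H : SimpleGraph V) (x y : V) (hxy : x ≠ y)
    (R R' : H.Walk x y)
    (hcover : ∀ e ∈ H.edgeSet, R.edges.count e + R'.edges.count e = 2) :
    ∃ X : H.Walk x y, ∀ e ∈ X.edges, R.edges.count e = 1 ∧ R'.edges.count e = 1 :=
  one_sided_walk_exists_general H x y R R' hcover
end

section
/- If every metric space in a family 𝒴 admits a (β',Δ)-Lipschitz random partition for all Δ > 0 with β' = O(1), and there exists an n-point metric space X with decomposability modulus β_X = Ω(log n), then any stochastic D-embedding of X into 𝒴 must have D = Ω(log n). -/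
/-- `(X,d)` admits a `(β,Δ)`-Lipschitz random partition: a finitely supported random
partition (given by labeling maps `P i : X → ℕ`) such that every part has diameter at most
`Δ` and `Pr[P(x) ≠ P(y)] ≤ β·d(x,y)/Δ`. -/
def AdmitsLipschitzPartition {X : Type} (d : X → X → ℝ) (β Δ : ℝ) : Prop :=
  ∃ (n : ℕ) (w : Fin n → ℝ) (P : Fin n → X → ℕ),
    (∀ i, 0 ≤ w i) ∧ (∑ i, w i = 1) ∧
    (∀ i x y, P i x = P i y → d x y ≤ Δ) ∧
    (∀ x y, ∑ i, (if P i x ≠ P i y then w i else 0) ≤ β * d x y / Δ)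

/-- A version of `AdmitsLipschitzPartition` with an arbitrary finite index type. -/
lemma admits_of_fintype {X : Type} (d : X → X → ℝ) (β Δ : ℝ)
    (ι : Type) [Fintype ι] (w : ι → ℝ) (P : ι → X → ℕ)
    (h1 : ∀ i, 0 ≤ w i) (h2 : ∑ i, w i = 1)
    (h3 : ∀ i x y, P i x = P i y → d x y ≤ Δ)
    (h4 : ∀ x y, ∑ i, (if P i x ≠ P i y then w i else 0) ≤ β * d x y / Δ) :
    AdmitsLipschitzPartition d β Δ := by
  classical
  set e := (Fintype.equivFin ι).symm
  refine ⟨Fintype.card ι, w ∘ e, P ∘ e, fun i => h1 _, ?_, fun i x y h => h3 _ x y h, ?_⟩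
  · rw [← h2]; exact Equiv.sum_comp e w
  · intro x y
    calc ∑ i, (if (P ∘ e) i x ≠ (P ∘ e) i y then (w ∘ e) i else 0)
        = ∑ i, (if P i x ≠ P i y then w i else 0) :=
          Equiv.sum_comp e (fun i => if P i x ≠ P i y then w i else 0)
      _ ≤ β * d x y / Δ := h4 x y

/-- if every space in a family `𝒴` admits `(β,Δ)`-Lipschitz random
partitions for all `Δ > 0` with `β = O(1)`, and `X` is an `n`-point metric space whose
decomposability modulus is at least `c·log n` (i.e. any `β'` working for all scales
satisfies `β' ≥ c·log n`), then any stochastic `D`-embedding of `X` into `𝒴` has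
`D ≥ (c/β)·log n`, i.e. `D = Ω(log n)`. -/
theorem lower_bound_from_decomposability
    {X Y : Type} [Fintype X] (d : X → X → ℝ) (n : ℕ) (hn : Fintype.card X = n)
    (c β D : ℝ) (hc : 0 < c) (hβ : 0 < β)
    (hX : ∀ β' : ℝ, (∀ Δ > (0 : ℝ), AdmitsLipschitzPartition d β' Δ) →
      c * Real.log n ≤ β')
    (m : ℕ) (w : Fin m → ℝ) (dY : Fin m → Y → Y → ℝ) (F : Fin m → X → Y)
    (hw : ∀ i, 0 ≤ w i) (hwsum : ∑ i, w i = 1)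
    (hnc : ∀ i x y, d x y ≤ dY i (F i x) (F i y))
    (hexp : ∀ x y, ∑ i, w i * dY i (F i x) (F i y) ≤ D * d x y)
    (hY : ∀ i, ∀ Δ > (0 : ℝ), AdmitsLipschitzPartition (dY i) β Δ) :
    (c / β) * Real.log n ≤ D := by
  classical
  have key : c * Real.log n ≤ β * D := by
    apply hX
    intro Δ hΔ
    -- choose partitions for each coordinate
    choose N wi Pi hPi using fun i => hY i Δ hΔ
    apply admits_of_fintype d (β * D) Δ ((i : Fin m) × Fin (N i))
      (fun p => w p.1 * wi p.1 p.2) (fun p x => Pi p.1 p.2 (F p.1 x))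
    · intro p
      exact mul_nonneg (hw p.1) ((hPi p.1).1 p.2)
    · rw [← Finset.univ_sigma_univ, Finset.sum_sigma]
      calc ∑ i, ∑ j, w i * wi i j = ∑ i, w i * ∑ j, wi i j := by
            simp [Finset.mul_sum]
        _ = 1 := by
            rw [← hwsum]
            exact Finset.sum_congr rfl fun i _ => by rw [(hPi i).2.1, mul_one]
    · intro p x y h
      exact le_trans (hnc p.1 x y) ((hPi p.1).2.2.1 p.2 _ _ h)
    · intro x y
      rw [← Finset.univ_sigma_univ, Finset.sum_sigma]
      have step1 : ∀ i : Fin m,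
          ∑ j, (if Pi i j (F i x) ≠ Pi i j (F i y) then w i * wi i j else 0)
            ≤ w i * (β * dY i (F i x) (F i y) / Δ) := by
        intro i
        have := (hPi i).2.2.2 (F i x) (F i y)
        calc ∑ j, (if Pi i j (F i x) ≠ Pi i j (F i y) then w i * wi i j else 0)
            = w i * ∑ j, (if Pi i j (F i x) ≠ Pi i j (F i y) then wi i j else 0) := by
              rw [Finset.mul_sum]
              exact Finset.sum_congr rfl fun j _ => by split <;> simp
          _ ≤ w i * (β * dY i (F i x) (F i y) / Δ) :=
              mul_le_mul_of_nonneg_left this (hw i)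
      calc ∑ i, ∑ j, (if Pi i j (F i x) ≠ Pi i j (F i y) then w i * wi i j else 0)
          ≤ ∑ i, w i * (β * dY i (F i x) (F i y) / Δ) :=
            Finset.sum_le_sum fun i _ => step1 i
        _ = (β / Δ) * ∑ i, w i * dY i (F i x) (F i y) := by
            rw [Finset.mul_sum]; exact Finset.sum_congr rfl fun i _ => by ring
        _ ≤ (β / Δ) * (D * d x y) := by
            apply mul_le_mul_of_nonneg_left (hexp x y)
            positivity
        _ = β * D * d x y / Δ := by ring
  calc (c / β) * Real.log n = (c * Real.log n) / β := by ring
    _ ≤ (β * D) / β := by gcongr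
    _ = D := by field_simp
end
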